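/- Define, for real η₁, η₂ and real k ≠ 0, the massless de Sitter bulk-bulk propagator G(η₁, η₂, k) = P(k)·[conj(K(η₁,k))·K(η₂,k)·𝟙(η₂ ≤ η₁) + conj(K(η₂,k))·K(η₁,k)·𝟙(η₁ < η₂) − K(η₁,k)·K(η₂,k)], where K(η,k) = (1 − ikη)e^{ikη} and P(k) = 1/(2k³). Then G is anti-Hermitian analytic in the exchanged energy: conj(G(η₁, η₂, −k)) = −G(η₁, η₂, k) for all real η₁, η₂ and all real k ≠ 0. -/
import Mathlib


open Complex

/-- The massless de Sitter bulk-boundary propagator `K(η,k) = (1 − ikη)e^{ikη}`. -/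
noncomputable def Kds (η k : ℝ) : ℂ :=
  (1 - Complex.I * (k : ℂ) * (η : ℂ)) * Complex.exp (Complex.I * (k : ℂ) * (η : ℂ))

/-- The massless de Sitter bulk-bulk propagator
`G(η₁,η₂,k) = P(k)·[K*(η₁)K(η₂)𝟙(η₂ ≤ η₁) + K*(η₂)K(η₁)𝟙(η₁ < η₂) − K(η₁)K(η₂)]`
with power spectrum `P(k) = 1/(2k³)`. -/
noncomputable def Gds (η₁ η₂ k : ℝ) : ℂ :=
  (1 / (2 * (k : ℂ) ^ 3)) *
    ((starRingEnd ℂ) (Kds η₁ k) * Kds η₂ k * (if η₂ ≤ η₁ then 1 else 0) +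
      (starRingEnd ℂ) (Kds η₂ k) * Kds η₁ k * (if η₁ < η₂ then 1 else 0) -
      Kds η₁ k * Kds η₂ k)

/-- The massless de Sitter bulk-bulk propagator is anti-Hermitian analytic in the
exchanged energy: `conj(G(η₁,η₂,−k)) = −G(η₁,η₂,k)` for all real `η₁, η₂` and `k ≠ 0`. -/
theorem Gds_antiHermitianAnalytic (η₁ η₂ k : ℝ) (hk : k ≠ 0) :
    (starRingEnd ℂ) (Gds η₁ η₂ (-k)) = -Gds η₁ η₂ k := by
  have hK : ∀ η : ℝ, Kds η (-k) = (starRingEnd ℂ) (Kds η k) := by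
    intro η
    simp only [Kds, map_mul, map_sub, map_one, Complex.conj_I, Complex.conj_ofReal,
      ← Complex.exp_conj]
    push_cast
    ring_nf
  simp only [Gds, hK, map_mul, map_sub, map_add, map_one, map_zero, map_div₀, map_ofNat,
    map_pow, apply_ite (starRingEnd ℂ), Complex.conj_conj, Complex.conj_ofReal]
  push_cast
  split_ifs <;> ring
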